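/- arXiv:2204.05408 — 6 statements merged into one kernel-verified Lean document; each statement's English description precedes it below -/
import Mathlib

section
/- Let I be a set of nonnegative real numbers satisfying the descending chain condition (every nonincreasing sequence in I is eventually constant; equivalently, I has no infinite strictly decreasing sequence). Then the set I^+ := {0} ∪ {x ∈ [0,1] | x = j_1 + ⋯ + j_ℓ for some ℓ ≥ 1 and j_1, …, j_ℓ ∈ I} also satisfies the descending chain condition. -/
/-- A set of reals satisfies the descending chain condition if it contains
no infinite strictly decreasing sequence. -/
def DCC (S : Set ℝ) : Prop := ¬ ∃ f : ℕ → ℝ, (∀ n, f n ∈ S) ∧ StrictAnti f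

/-- A set of reals satisfies the ascending chain condition if it contains
no infinite strictly increasing sequence. -/
def ACC (S : Set ℝ) : Prop := ¬ ∃ f : ℕ → ℝ, (∀ n, f n ∈ S) ∧ StrictMono f

/-- `I⁺ = {0} ∪ {x ∈ [0,1] | x is a finite (nonempty) sum of elements of I}`. -/
def plusSet (I : Set ℝ) : Set ℝ :=
  {0} ∪ {x | 0 ≤ x ∧ x ≤ 1 ∧ ∃ l : List ℝ, l ≠ [] ∧ (∀ j ∈ l, j ∈ I) ∧ l.sum = x}

/-- `D(I) = {a ≤ 1 | a = (m - 1 + f)/m, m ∈ ℤ_{>0}, f ∈ I⁺}`. -/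
def DSet (I : Set ℝ) : Set ℝ :=
  {a | a ≤ 1 ∧ ∃ m : ℕ, 0 < m ∧ ∃ f ∈ plusSet I, a = ((m : ℝ) - 1 + f) / m}

/-- `D_d(I) = {a ≤ 1 | a = (m - 1 + f + k·d)/m, k, m ∈ ℤ_{>0}, f ∈ I⁺}`. -/
def DdSet (d : ℝ) (I : Set ℝ) : Set ℝ :=
  {a | a ≤ 1 ∧ ∃ k m : ℕ, 0 < k ∧ 0 < m ∧ ∃ f ∈ plusSet I,
    a = ((m : ℝ) - 1 + f + (k : ℝ) * d) / m}

theorem plusSet_DCC (I : Set ℝ) (hI : ∀ x ∈ I, 0 ≤ x) (hDCC : DCC I) :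
    DCC (plusSet I) := by
  have hIwf : I.IsWF := by
    rw [Set.isWF_iff_no_descending_seq]
    intro f hf hmem
    exact hDCC ⟨f, hmem, hf⟩
  have hpwo : (AddSubmonoid.closure I : Set ℝ).IsPWO :=
    hIwf.isPWO.addSubmonoid_closure hI
  have hsub : plusSet I ⊆ (AddSubmonoid.closure I : Set ℝ) := by
    rintro x (rfl | ⟨-, -, l, -, hl, rfl⟩)
    · exact (AddSubmonoid.closure I).zero_mem
    · exact AddSubmonoid.list_sum_mem _ fun j hj =>
        AddSubmonoid.subset_closure (hl j hj)
  have hwf : (plusSet I).IsWF := (hpwo.mono hsub).isWF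
  rw [Set.isWF_iff_no_descending_seq] at hwf
  rintro ⟨f, hmem, hf⟩
  exact hwf f hf hmem
end

section
/- Let I be a set of nonnegative real numbers. Then D(D(I)) = D(I) ∪ {1}. -/
/-!
Write an element of `D(I)` as `(m - 1 + f) / m` with `f ≥ 0` a finite sum of elements of `I`.
For `m = 1` it is such a sum itself, otherwise it is at least `1/2`. So a sum of two such
numbers is at least `1`, or (absorbing the `m = 1` summand into the other numerator as `m • f`)
of the same shape; hence every element of `D(I)⁺` is `1` or of that shape. As
`((m - 1) + (M - 1 + F) / M) / m = (m M - 1 + F) / (m M)`, this puts `D(D(I))` inside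
`D(I) ∪ {1}`. Conversely `D(I) ⊆ D(I)⁺ ⊆ D(D(I))`, and `1 = 1/2 + 1/2 ∈ D(I)⁺`.
-/

theorem mem_plusSet_iff {I : Set ℝ} {x : ℝ} :
    x ∈ plusSet I ↔ x ∈ AddSubmonoid.closure I ∧ 0 ≤ x ∧ x ≤ 1 := by
  constructor
  · rintro (rfl | ⟨h0, h1, l, -, hl, rfl⟩)
    · exact ⟨zero_mem _, le_rfl, zero_le_one⟩
    · exact ⟨list_sum_mem fun y hy => AddSubmonoid.subset_closure (hl y hy), h0, h1⟩
  · rintro ⟨hx, h0, h1⟩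
    obtain ⟨l, hl, rfl⟩ := AddSubmonoid.exists_list_of_mem_closure hx
    rcases eq_or_ne l [] with rfl | hne
    · exact Or.inl rfl
    · exact Or.inr ⟨h0, h1, l, hne, hl, rfl⟩

theorem plusSet_subset_DSet (S : Set ℝ) : plusSet S ⊆ DSet S := fun f hf =>
  ⟨(mem_plusSet_iff.1 hf).2.2, 1, one_pos, f, hf, by simp⟩

/-- The numbers `(m - 1 + f) / m` of `D(I)`, without the bounds `f ≤ 1` and `a ≤ 1`. -/
def IsDForm (I : Set ℝ) (a : ℝ) : Prop :=
  ∃ m : ℕ, 0 < m ∧ ∃ f ∈ AddSubmonoid.closure I, 0 ≤ f ∧ a = ((m : ℝ) - 1 + f) / m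

namespace IsDForm

variable {I : Set ℝ} {a b : ℝ}

theorem of_mem_closure {f : ℝ} (hf : f ∈ AddSubmonoid.closure I) (h0 : 0 ≤ f) : IsDForm I f :=
  ⟨1, one_pos, f, hf, h0, by simp⟩

theorem nonneg (ha : IsDForm I a) : 0 ≤ a := by
  obtain ⟨m, hm, f, -, hf0, rfl⟩ := ha
  have : (1 : ℝ) ≤ m := by exact_mod_cast hm
  exact div_nonneg (by linarith) (by linarith)

theorem comp (ha : IsDForm I a) {m : ℕ} (hm : 0 < m) : IsDForm I (((m : ℝ) - 1 + a) / m) := by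
  obtain ⟨M, hM, F, hF, hF0, rfl⟩ := ha
  refine ⟨m * M, Nat.mul_pos hm hM, F, hF, hF0, ?_⟩
  have : (m : ℝ) ≠ 0 := by positivity
  have : (M : ℝ) ≠ 0 := by positivity
  push_cast
  field_simp
  ring

theorem add_mem_closure (ha : IsDForm I a) {f : ℝ} (hf : f ∈ AddSubmonoid.closure I)
    (h0 : 0 ≤ f) : IsDForm I (a + f) := by
  obtain ⟨m, hm, g, hg, hg0, rfl⟩ := ha
  refine ⟨m, hm, g + m * f, add_mem hg (by simpa using nsmul_mem hf m), by positivity, ?_⟩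
  have : (m : ℝ) ≠ 0 := by positivity
  field_simp
  ring

theorem mem_closure_or_half_le (ha : IsDForm I a) :
    (a ∈ AddSubmonoid.closure I ∧ 0 ≤ a) ∨ 1 / 2 ≤ a := by
  obtain ⟨m, hm, f, hf, hf0, rfl⟩ := ha
  rcases (Nat.one_le_iff_ne_zero.2 hm.ne').eq_or_lt with rfl | hm2
  · left; simpa using ⟨hf, hf0⟩
  · right
    have : (2 : ℝ) ≤ m := by exact_mod_cast hm2
    rw [le_div_iff₀ (by linarith)]
    linarith

theorem add (ha : IsDForm I a) (hb : IsDForm I b) : IsDForm I (a + b) ∨ 1 ≤ a + b := by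
  rcases ha.mem_closure_or_half_le with ⟨ha_mem, ha0⟩ | ha_half
  · exact Or.inl (add_comm a b ▸ hb.add_mem_closure ha_mem ha0)
  rcases hb.mem_closure_or_half_le with ⟨hb_mem, hb0⟩ | hb_half
  · exact Or.inl (ha.add_mem_closure hb_mem hb0)
  · exact Or.inr (by linarith)

theorem mem_DSet (ha : IsDForm I a) (ha1 : a ≤ 1) : a ∈ DSet I := by
  obtain ⟨m, hm, f, hf, hf0, rfl⟩ := ha
  have hm1 : (1 : ℝ) ≤ m := by exact_mod_cast hm
  have hf1 : f ≤ 1 := by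
    rw [div_le_one (by linarith)] at ha1
    linarith
  exact ⟨ha1, m, hm, f, mem_plusSet_iff.2 ⟨hf, hf0, hf1⟩, rfl⟩

theorem of_mem_DSet (ha : a ∈ DSet I) : IsDForm I a := by
  obtain ⟨-, m, hm, f, hf, rfl⟩ := ha
  obtain ⟨hf, hf0, -⟩ := mem_plusSet_iff.1 hf
  exact ⟨m, hm, f, hf, hf0, rfl⟩

end IsDForm

def dFormSubmonoid (I : Set ℝ) : AddSubmonoid ℝ where
  carrier := {a | IsDForm I a ∨ 1 ≤ a}
  zero_mem' := Or.inl (IsDForm.of_mem_closure (zero_mem _) le_rfl)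
  add_mem' := by
    rintro a b (ha | ha) (hb | hb)
    · exact ha.add hb
    · exact Or.inr (by linarith [ha.nonneg])
    · exact Or.inr (by linarith [hb.nonneg])
    · exact Or.inr (by linarith)

theorem isDForm_or_one_le_of_mem_closure_DSet {I : Set ℝ} {a : ℝ}
    (ha : a ∈ AddSubmonoid.closure (DSet I)) : IsDForm I a ∨ 1 ≤ a :=
  (AddSubmonoid.closure_le (S := dFormSubmonoid I)).2
    (fun _ hx => Or.inl (IsDForm.of_mem_DSet hx)) ha

theorem DSet_DSet_subset (I : Set ℝ) : DSet (DSet I) ⊆ DSet I ∪ {1} := by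
  rintro a ⟨ha1, m, hm, f, hf, rfl⟩
  obtain ⟨hf, -, hf1⟩ := mem_plusSet_iff.1 hf
  rcases isDForm_or_one_le_of_mem_closure_DSet hf with hf | hf1'
  · exact Or.inl ((hf.comp hm).mem_DSet ha1)
  · obtain rfl := le_antisymm hf1 hf1'
    have : (m : ℝ) ≠ 0 := by positivity
    right
    simp [this]

theorem subset_DSet_DSet (I : Set ℝ) : DSet I ⊆ DSet (DSet I) := fun _ ha =>
  plusSet_subset_DSet _ <| mem_plusSet_iff.2
    ⟨AddSubmonoid.subset_closure ha, (IsDForm.of_mem_DSet ha).nonneg, ha.1⟩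

theorem one_mem_DSet_DSet (I : Set ℝ) : 1 ∈ DSet (DSet I) := by
  have half_mem : (1 / 2 : ℝ) ∈ DSet I := ⟨by norm_num, 2, two_pos, 0, Or.inl rfl, by norm_num⟩
  have one_mem : (1 : ℝ) ∈ AddSubmonoid.closure (DSet I) := by
    rw [← add_halves (1 : ℝ)]
    exact add_mem (AddSubmonoid.subset_closure half_mem) (AddSubmonoid.subset_closure half_mem)
  exact plusSet_subset_DSet _ (mem_plusSet_iff.2 ⟨one_mem, zero_le_one, le_rfl⟩)

theorem DSet_DSet_general (I : Set ℝ) :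
    DSet (DSet I) = DSet I ∪ {1} :=
  (DSet_DSet_subset I).antisymm <|
    Set.union_subset (subset_DSet_DSet I) (Set.singleton_subset_iff.2 (one_mem_DSet_DSet I))

theorem DSet_DSet (I : Set ℝ) (hI : ∀ x ∈ I, 0 ≤ x) :
    DSet (DSet I) = DSet I ∪ {1} :=
  DSet_DSet_general I
end

section
/- Let J be a finite set of real numbers and let I be a set of nonnegative real numbers satisfying the descending chain condition. Then the set I₁ := {i ∈ I | there exist positive integers m, k and f ∈ I^+ with (m − 1 + k·i + f)/m ∈ J ∩ [0,1]} is finite. -/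
/-!
If `(m - 1 + k i + f) / m = a ≤ 1`, then `f = c - k i` with `c = 1 - m (1 - a) ∈ [0, 1]`, and for
each `a` only finitely many such `c` occur: just `c = 1` when `a = 1`, and `m ≤ 1 / (1 - a)`
otherwise. Since `I` satisfies DCC, so does `I⁺`; hence for fixed `c` and `k` the set of `i ∈ I`
with `c - k i ∈ I⁺` is finite, being well-founded with well-founded image under the decreasing
map `i ↦ c - k i`. Finally, `k ≤ 1 / ε` as soon as `i ≥ ε > 0`, and the least positive element
of the set serves as `ε`.
-/

lemma DCC.isWF {S : Set ℝ} (h : DCC S) : S.IsWF :=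
  Set.isWF_iff_no_descending_seq.2 fun f hf hmem => h ⟨f, hmem, hf⟩

lemma plusSet_nonneg {I : Set ℝ} {f : ℝ} (hf : f ∈ plusSet I) : 0 ≤ f := by
  rcases hf with rfl | h
  · exact le_rfl
  · exact h.1

lemma plusSet_subset_closure (I : Set ℝ) :
    plusSet I ⊆ (AddSubmonoid.closure I : Set ℝ) := by
  rintro x (rfl | ⟨-, -, l, -, hl, rfl⟩)
  · exact zero_mem _
  · exact list_sum_mem fun y hy => AddSubmonoid.subset_closure (hl y hy)

lemma plusSet_isWF {I : Set ℝ} (hI : ∀ x ∈ I, 0 ≤ x) (hWF : I.IsWF) :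
    (plusSet I).IsWF :=
  (hWF.isPWO.addSubmonoid_closure hI).isWF.mono (plusSet_subset_closure I)

lemma Set.IsWF.finite_of_isWF_image_of_strictAnti {α β : Type*} [LinearOrder α] [Preorder β]
    {s : Set α} (hs : s.IsWF) {φ : α → β} (hφ : StrictAnti φ) (himg : (φ '' s).IsWF) :
    s.Finite := by
  by_contra hinf
  have : Infinite s := Set.infinite_coe_iff.2 hinf
  obtain ⟨f, hmono | hanti⟩ := Infinite.exists_strictMono_or_strictAnti s
  · exact Set.isWF_iff_no_descending_seq.1 himg (fun n => φ (f n))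
      (hφ.comp_strictMono fun _ _ h => hmono h)
      fun n => ⟨f n, (f n).2, rfl⟩
  · exact Set.isWF_iff_no_descending_seq.1 hs (fun n => f n) (fun _ _ h => hanti h)
      fun n => (f n).2

lemma Set.IsWF.finite_inter_Ioi_of_forall_finite_inter_Ici {α : Type*} [LinearOrder α]
    {s : Set α} (hs : s.IsWF) (b : α) (h : ∀ ε, b < ε → (s ∩ Set.Ici ε).Finite) :
    (s ∩ Set.Ioi b).Finite := by
  rcases (s ∩ Set.Ioi b).eq_empty_or_nonempty with hempty | hne
  · simp [hempty]
  have hmin := (hs.mono Set.inter_subset_left).min_mem hne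
  refine (h _ hmin.2).subset fun x hx => ⟨hx.1, ?_⟩
  exact (hs.mono Set.inter_subset_left).min_le hne hx

lemma finite_setOf_eq_one_sub_mul {a : ℝ} (ha : a ≤ 1) :
    {c : ℝ | 0 ≤ c ∧ ∃ m : ℕ, c = 1 - m * (1 - a)}.Finite := by
  rcases ha.eq_or_lt with rfl | ha
  · refine (Set.finite_singleton 1).subset ?_
    rintro c ⟨-, m, rfl⟩
    simp
  · refine ((Set.finite_Iic ⌊1 / (1 - a)⌋₊).image fun m : ℕ => 1 - m * (1 - a)).subset ?_
    rintro c ⟨hc, m, rfl⟩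
    refine ⟨m, Nat.le_floor ?_, rfl⟩
    rw [le_div_iff₀ (by linarith)]
    linarith

lemma finite_setOf_sub_mul_mem {S T : Set ℝ} (hS : S.IsWF) (hT : T.IsWF) (c : ℝ) {k : ℝ}
    (hk : 0 < k) : {x ∈ S | c - k * x ∈ T}.Finite :=
  (hS.mono (Set.sep_subset _ _)).finite_of_isWF_image_of_strictAnti
    (φ := fun x => c - k * x) (fun _ _ h => by dsimp only; gcongr)
    (hT.mono (by rintro _ ⟨x, hx, rfl⟩; exact hx.2))

/-- Solving `(m - 1 + k i + f) / m = a` for `f`; once `i ≥ ε > 0` this also bounds `k` by `1 / ε`. -/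
lemma mem_cover_of_div_eq {I : Set ℝ} {a i ε f : ℝ} {m k : ℕ} (hε : 0 < ε) (hi : ε ≤ i)
    (hm : 0 < m) (hk : 0 < k) (hf : f ∈ plusSet I) (ha : a ≤ 1)
    (h : ((m : ℝ) - 1 + k * i + f) / m = a) :
    1 - m * (1 - a) ∈ {c : ℝ | 0 ≤ c ∧ ∃ m : ℕ, c = 1 - m * (1 - a)} ∧
      k ∈ Finset.Icc 1 ⌊1 / ε⌋₊ ∧ 1 - m * (1 - a) - k * i ∈ plusSet I := by
  have hf_eq : f = 1 - m * (1 - a) - k * i := by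
    rw [div_eq_iff (by positivity)] at h
    linarith
  have hf0 := plusSet_nonneg hf
  have hm1 : (0 : ℝ) ≤ m * (1 - a) := mul_nonneg m.cast_nonneg (by linarith)
  have hki : (k : ℝ) * ε ≤ k * i := by gcongr
  refine ⟨⟨by nlinarith, m, rfl⟩, Finset.mem_Icc.2 ⟨hk, Nat.le_floor ?_⟩, hf_eq ▸ hf⟩
  rw [le_div_iff₀ hε]
  linarith

theorem finite_to_finite (I J : Set ℝ) (hI : ∀ x ∈ I, 0 ≤ x) (hDCC : DCC I)
    (hJ : J.Finite) :
    Set.Finite {i ∈ I | ∃ m k : ℕ, 0 < m ∧ 0 < k ∧ ∃ f ∈ plusSet I,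
      ((m : ℝ) - 1 + (k : ℝ) * i + f) / m ∈ J ∩ Set.Icc (0:ℝ) 1} := by
  set S := {i ∈ I | ∃ m k : ℕ, 0 < m ∧ 0 < k ∧ ∃ f ∈ plusSet I,
      ((m : ℝ) - 1 + (k : ℝ) * i + f) / m ∈ J ∩ Set.Icc (0:ℝ) 1}
  have hWF : I.IsWF := hDCC.isWF
  have hS_pos : (S ∩ Set.Ioi 0).Finite := by
    refine (hWF.mono fun i hi => hi.1).finite_inter_Ioi_of_forall_finite_inter_Ici 0
      fun ε hε => ?_
    refine ((hJ.inter_of_left (Set.Icc 0 1)).biUnion fun a ha =>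
      (finite_setOf_eq_one_sub_mul ha.2.2).biUnion fun c _ =>
      (Finset.Icc 1 ⌊1 / ε⌋₊).finite_toSet.biUnion fun k hk =>
      finite_setOf_sub_mul_mem hWF (plusSet_isWF hI hWF) c (k := k)
        (Nat.cast_pos.2 (Finset.mem_Icc.1 hk).1)).subset ?_
    rintro i ⟨⟨hiI, m, k, hm, hk, f, hf, hJ, ha⟩, hεi⟩
    obtain ⟨hc, hk', hmem⟩ := mem_cover_of_div_eq hε hεi hm hk hf ha.2 rfl
    simp only [Set.mem_iUnion]
    exact ⟨_, ⟨hJ, ha⟩, _, hc, k, hk', hiI, hmem⟩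
  refine (hS_pos.insert 0).subset fun i hi => ?_
  rcases (hI i hi.1).eq_or_lt with h | h
  · exact Or.inl h.symm
  · exact Or.inr ⟨hi, h⟩
end

section
/- Let I and J be sets of nonnegative real numbers satisfying the descending chain condition, and assume 0 ∉ J. Then the set T := {(1 − i)/j | i ∈ I^+ ∩ [0,1], j ∈ J^+, j > 0, (1 − i)/j ≥ 0} satisfies the ascending chain condition, i.e., T contains no infinite strictly increasing sequence. -/
lemma ACC.mono {S T : Set ℝ} (hT : ACC T) (hST : S ⊆ T) : ACC S :=
  fun ⟨f, hf, hmono⟩ => hT ⟨f, fun n => hST (hf n), hmono⟩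

lemma Set.IsPWO.acc_image_of_antitoneOn {α : Type*} [Preorder α] {s : Set α} (hs : s.IsPWO)
    {φ : α → ℝ} (hφ : AntitoneOn φ s) : ACC (φ '' s) := by
  rintro ⟨f, hf, hmono⟩
  choose p hp hpf using hf
  obtain ⟨m, n, hmn, hle⟩ := hs.exists_lt hp
  have : f n ≤ f m := by rw [← hpf m, ← hpf n]; exact hφ (hp m) (hp n) hle
  exact (hmono hmn).not_ge this

lemma plusSet_subset_addSubmonoidClosure (I : Set ℝ) :
    plusSet I ⊆ AddSubmonoid.closure I := by
  rintro x (rfl | ⟨-, -, l, -, hl, rfl⟩)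
  · exact zero_mem _
  · exact AddSubmonoid.list_sum_mem _ fun y hy => AddSubmonoid.subset_closure (hl y hy)

lemma isPWO_plusSet {I : Set ℝ} (hI : ∀ x ∈ I, 0 ≤ x) (h : DCC I) : (plusSet I).IsPWO :=
  (h.isWF.isPWO.addSubmonoid_closure hI).mono (plusSet_subset_addSubmonoidClosure I)

lemma antitoneOn_one_sub_div :
    AntitoneOn (fun p : ℝ × ℝ => (1 - p.1) / p.2) (Set.Iic 1 ×ˢ Set.Ioi 0) := by
  rintro ⟨i, j⟩ ⟨hi, hj⟩ ⟨i', j'⟩ - ⟨hii', hjj'⟩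
  exact div_le_div₀ (sub_nonneg.2 hi) (sub_le_sub_left hii' 1) hj hjj'

theorem lct_coreg_zero_ACC_general (I J : Set ℝ) (hI : ∀ x ∈ I, 0 ≤ x)
    (hJ : ∀ x ∈ J, 0 ≤ x) (hIdcc : DCC I) (hJdcc : DCC J) :
    ACC {t : ℝ | ∃ i ∈ plusSet I, i ≤ 1 ∧ ∃ j ∈ plusSet J, 0 < j ∧
      t = (1 - i) / j ∧ 0 ≤ t} := by
  set s := (plusSet I ∩ Set.Iic 1) ×ˢ (plusSet J ∩ Set.Ioi 0)
  have hs : s.IsPWO :=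
    ((isPWO_plusSet hI hIdcc).mono Set.inter_subset_left).prod
      ((isPWO_plusSet hJ hJdcc).mono Set.inter_subset_left)
  have hφ : AntitoneOn (fun p : ℝ × ℝ => (1 - p.1) / p.2) s :=
    antitoneOn_one_sub_div.mono (Set.prod_mono Set.inter_subset_right Set.inter_subset_right)
  refine (hs.acc_image_of_antitoneOn hφ).mono ?_
  rintro t ⟨i, hi, hi1, j, hj, hj0, rfl, -⟩
  exact ⟨(i, j), ⟨⟨hi, hi1⟩, hj, hj0⟩, rfl⟩

theorem lct_coreg_zero_ACC (I J : Set ℝ) (hI : ∀ x ∈ I, 0 ≤ x)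
    (hJ : ∀ x ∈ J, 0 ≤ x) (hIdcc : DCC I) (hJdcc : DCC J) (hJ0 : (0:ℝ) ∉ J) :
    ACC {t : ℝ | ∃ i ∈ plusSet I, i ≤ 1 ∧ ∃ j ∈ plusSet J, 0 < j ∧
      t = (1 - i) / j ∧ 0 ≤ t} :=
  lct_coreg_zero_ACC_general I J hI hJ hIdcc hJdcc
end

section
/- Let I and J be sets of nonnegative real numbers satisfying the descending chain condition, and let (t_k) be a bounded strictly increasing sequence of positive real numbers. Then the set L := {i + t_k·j | i ∈ I ∪ {0}, j ∈ J ∪ {0}, k ∈ ℤ_{>0}} satisfies the descending chain condition. -/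
/-! Since `ℝ` is linearly ordered, DCC means partially well-ordered. The set in question is the
image of the partially well-ordered set `(I ∪ {0}) × (J ∪ {0}) × ℕ` under `(i, j, k) ↦ i + t k * j`,
which is monotone for the product order because `j ≥ 0` and `t` is nonnegative and increasing;
monotone images of partially well-ordered sets are partially well-ordered. -/

lemma dcc_iff_isPWO (S : Set ℝ) : DCC S ↔ S.IsPWO := by
  rw [Set.isPWO_iff_isWF, Set.isWF_iff_no_descending_seq]
  exact ⟨fun h f hf hS => h ⟨f, hS, hf⟩, fun h ⟨f, hS, hf⟩ => h f hf hS⟩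

lemma DCC.isPWO_union_zero {S : Set ℝ} (hS : DCC S) : (S ∪ {0}).IsPWO :=
  ((dcc_iff_isPWO S).1 hS).union (Set.isPWO_singleton 0)

lemma monotoneOn_add_mul_of_nonneg {α ι : Type*} [Semiring α] [PartialOrder α]
    [IsOrderedRing α] [Preorder ι] {t : ι → α} (ht : Monotone t) (ht₀ : ∀ k, 0 ≤ t k) :
    MonotoneOn (fun p : α × α × ι => p.1 + t p.2.2 * p.2.1) {p | 0 ≤ p.2.1} :=
  fun _ hp _ _ hpq => add_le_add hpq.1 (mul_le_mul (ht hpq.2.2) hpq.2.1 hp (ht₀ _))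

theorem coefficients_DCC_general (I J : Set ℝ)
    (hJ : ∀ x ∈ J, 0 ≤ x) (hIdcc : DCC I) (hJdcc : DCC J)
    (t : ℕ → ℝ) (htpos : ∀ k, 0 < t k) (htmono : StrictMono t) :
    DCC {x : ℝ | ∃ i ∈ I ∪ {0}, ∃ j ∈ J ∪ {0}, ∃ k : ℕ, x = i + t k * j} := by
  set D : Set (ℝ × ℝ × ℕ) := (I ∪ {0}) ×ˢ (J ∪ {0}) ×ˢ Set.univ
  have hD : D.IsPWO := hIdcc.isPWO_union_zero.prod
    (hJdcc.isPWO_union_zero.prod (Set.isWF_univ_iff.2 inferInstance).isPWO)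
  have hmono : MonotoneOn (fun p : ℝ × ℝ × ℕ => p.1 + t p.2.2 * p.2.1) D :=
    (monotoneOn_add_mul_of_nonneg htmono.monotone fun k => (htpos k).le).mono
      fun p hp => hp.2.1.elim (hJ _) fun h => (Set.mem_singleton_iff.1 h).ge
  have himage : {x : ℝ | ∃ i ∈ I ∪ {0}, ∃ j ∈ J ∪ {0}, ∃ k : ℕ, x = i + t k * j} =
      (fun p : ℝ × ℝ × ℕ => p.1 + t p.2.2 * p.2.1) '' D := by
    ext x
    constructor
    · rintro ⟨i, hi, j, hj, k, rfl⟩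
      exact ⟨(i, j, k), ⟨hi, hj, trivial⟩, rfl⟩
    · rintro ⟨⟨i, j, k⟩, ⟨hi, hj, -⟩, rfl⟩
      exact ⟨i, hi, j, hj, k, rfl⟩
  rw [dcc_iff_isPWO, himage]
  exact hD.image_of_monotoneOn hmono

theorem coefficients_DCC (I J : Set ℝ) (hI : ∀ x ∈ I, 0 ≤ x)
    (hJ : ∀ x ∈ J, 0 ≤ x) (hIdcc : DCC I) (hJdcc : DCC J)
    (t : ℕ → ℝ) (htpos : ∀ k, 0 < t k) (htmono : StrictMono t)
    (htbdd : ∃ C : ℝ, ∀ k, t k ≤ C) :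
    DCC {x : ℝ | ∃ i ∈ I ∪ {0}, ∃ j ∈ J ∪ {0}, ∃ k : ℕ, x = i + t k * j} :=
  coefficients_DCC_general I J hJ hIdcc hJdcc t htpos htmono
end

section
/- Let I be a set of nonnegative real numbers satisfying the descending chain condition, and let L₀ be a finite set of real numbers. Then there is no strictly increasing sequence (t_k) of positive reals such that for every k there exist i_k ∈ I and j_k ∈ I with j_k > 0 and i_k + t_k·j_k ∈ L₀; that is, the set {t > 0 | ∃ i ∈ I, j ∈ I, j > 0, i + t·j ∈ L₀} satisfies the ascending chain condition. -/
theorem thresholds_ACC (I : Set ℝ) (hI : ∀ x ∈ I, 0 ≤ x) (hDCC : DCC I)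
    (L₀ : Set ℝ) (hL₀ : L₀.Finite) :
    ACC {t : ℝ | 0 < t ∧ ∃ i ∈ I, ∃ j ∈ I, 0 < j ∧ i + t * j ∈ L₀} := by
  rintro ⟨f, hf, hmono⟩
  choose i hiI j hjI hjpos hmem using fun n => (hf n).2
  have hfpos : ∀ n, 0 < f n := fun n => (hf n).1
  haveI : Finite L₀ := hL₀
  obtain ⟨y, hy⟩ := Finite.exists_infinite_fiber
    (fun n : ℕ => (⟨i n + f n * j n, hmem n⟩ : L₀))
  rw [Set.infinite_coe_iff] at hy
  set p : ℕ → Prop := fun n => (⟨i n + f n * j n, hmem n⟩ : L₀) = y with hp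
  have hpi : (setOf p).Infinite := hy
  have hval : ∀ n, p n → i n + f n * j n = (y : ℝ) := by
    intro n hn
    exact congrArg Subtype.val hn
  set φ : ℕ → ℕ := Nat.nth p with hφ
  have hφmono : StrictMono φ := Nat.nth_strictMono hpi
  have hφmem : ∀ n, p (φ n) := Nat.nth_mem_of_infinite hpi
  obtain ⟨g, hg | hg⟩ := exists_increasing_or_nonincreasing_subseq (α := ℝ)
    (· ≤ ·) (fun n => j (φ n))
  · -- j nondecreasing along subsequence: i strictly decreasing
    apply hDCC
    refine ⟨fun n => i (φ (g n)), fun n => hiI _, ?_⟩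
    intro m n hmn
    have h1 : i (φ (g m)) + f (φ (g m)) * j (φ (g m)) = (y : ℝ) := hval _ (hφmem _)
    have h2 : i (φ (g n)) + f (φ (g n)) * j (φ (g n)) = (y : ℝ) := hval _ (hφmem _)
    have hfm : f (φ (g m)) < f (φ (g n)) :=
      hmono (hφmono (g.strictMono hmn))
    have hjm : j (φ (g m)) ≤ j (φ (g n)) := hg m n hmn
    have : f (φ (g m)) * j (φ (g m)) < f (φ (g n)) * j (φ (g n)) := by
      calc f (φ (g m)) * j (φ (g m)) < f (φ (g n)) * j (φ (g m)) := by
            exact mul_lt_mul_of_pos_right hfm (hjpos _)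
        _ ≤ f (φ (g n)) * j (φ (g n)) :=
            mul_le_mul_of_nonneg_left hjm (hfpos _).le
    linarith
  · -- j strictly decreasing along subsequence: contradiction with DCC
    apply hDCC
    refine ⟨fun n => j (φ (g n)), fun n => hjI _, ?_⟩
    intro m n hmn
    exact lt_of_not_ge (hg m n hmn)
end
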